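/- arXiv:1409.8054 — 3 statements merged into one kernel-verified Lean document; each statement's English description precedes it below -/
import Mathlib

section
/- Assume the genericity condition. If two configurations η, η' : V → {0,…,N} satisfy H⁰ᵢ(η) = H⁰ᵢ(η'), then η and η' contain the same oriented nearest-neighbour pairs with the same multiplicities: for every pair (a,b) ∈ {0,…,N}², the number of sites x with x, x+e₁ ∈ V and (η x, η (x+e₁)) = (a,b) equals the number of sites x with x, x+e₁ ∈ V and (η' x, η' (x+e₁)) = (a,b), and likewise the number of sites x with x, x+e₂ ∈ V and (η x, η (x+e₂)) = (a,b) equals the corresponding number for η'. -/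
open Finset

/-- First lattice unit vector of `ℤ²`. -/
def e1 : ℤ × ℤ := (1, 0)

/-- Second lattice unit vector of `ℤ²`. -/
def e2 : ℤ × ℤ := (0, 1)

/-- Interaction energy `H⁰ᵢ(η) = Σ_{x : x, x+e₁ ∈ V} f₁(η x, η (x+e₁))
+ Σ_{x : x, x+e₂ ∈ V} f₂(η x, η (x+e₂))`. -/
noncomputable def interactionEnergy (f1 f2 : ℕ → ℕ → ℝ) (V : Finset (ℤ × ℤ))
    (η : ℤ × ℤ → ℕ) : ℝ :=
  ∑ x ∈ V.filter (fun x => x + e1 ∈ V), f1 (η x) (η (x + e1)) +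
  ∑ x ∈ V.filter (fun x => x + e2 ∈ V), f2 (η x) (η (x + e2))

/-- Genericity condition: the `2(N+1)²` real numbers `f₁(a,b), f₂(a,b)` for
`(a,b) ∈ {0,…,N}²` are linearly independent over `ℚ`. -/
def Generic (N : ℕ) (f1 f2 : ℕ → ℕ → ℝ) : Prop :=
  LinearIndependent ℚ (fun p : Fin 2 × Fin (N + 1) × Fin (N + 1) =>
    if p.1 = 0 then f1 p.2.1 p.2.2 else f2 p.2.1 p.2.2)

lemma dir_sum (N : ℕ) (f : ℕ → ℕ → ℝ) (e : ℤ × ℤ) (V : Finset (ℤ × ℤ))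
    (ζ : ℤ × ℤ → ℕ) (hζ : ∀ x, ζ x ≤ N) :
    ∑ x ∈ V.filter (fun x => x + e ∈ V), f (ζ x) (ζ (x + e)) =
    ∑ q : Fin (N + 1) × Fin (N + 1),
      ((V.filter fun x => x + e ∈ V ∧ ζ x = q.1 ∧ ζ (x + e) = q.2).card : ℝ) * f q.1 q.2 := by
  classical
  have hlt : ∀ x, ζ x < N + 1 := fun x => Nat.lt_succ_of_le (hζ x)
  set S := V.filter (fun x => x + e ∈ V) with hS
  let φ : ℤ × ℤ → Fin (N + 1) × Fin (N + 1) :=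
    fun x => (⟨ζ x, hlt x⟩, ⟨ζ (x + e), hlt _⟩)
  rw [← Finset.sum_fiberwise S φ (fun x => f (ζ x) (ζ (x + e)))]
  refine Finset.sum_congr rfl fun q _ => ?_
  have hset : S.filter (fun x => φ x = q)
      = V.filter (fun x => x + e ∈ V ∧ ζ x = q.1 ∧ ζ (x + e) = q.2) := by
    rw [hS, Finset.filter_filter]
    refine Finset.filter_congr fun x _ => ?_
    simp only [φ, Prod.ext_iff, Fin.ext_iff]
  rw [hset]
  have hterm : ∀ x ∈ V.filter (fun x => x + e ∈ V ∧ ζ x = q.1 ∧ ζ (x + e) = q.2),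
      f (ζ x) (ζ (x + e)) = f q.1 q.2 := by
    intro x hx
    simp only [Finset.mem_filter] at hx
    rw [hx.2.2.1, hx.2.2.2]
  rw [Finset.sum_congr rfl hterm, Finset.sum_const, nsmul_eq_mul]

/-- **Equal energy forces equal pair statistics.** Under the genericity
condition, if two configurations `η, η' : V → {0,…,N}` have the same interaction
energy, then they contain the same oriented nearest-neighbour pairs with the same
multiplicities, in both lattice directions. -/
theorem equal_energy_equal_pair_counts (N : ℕ) (f1 f2 : ℕ → ℕ → ℝ)
    (hgen : Generic N f1 f2) (V : Finset (ℤ × ℤ)) (η η' : ℤ × ℤ → ℕ)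
    (hη : ∀ x, η x ≤ N) (hη' : ∀ x, η' x ≤ N)
    (hE : interactionEnergy f1 f2 V η = interactionEnergy f1 f2 V η') :
    ∀ a b : ℕ, a ≤ N → b ≤ N →
      (V.filter fun x => x + e1 ∈ V ∧ η x = a ∧ η (x + e1) = b).card
        = (V.filter fun x => x + e1 ∈ V ∧ η' x = a ∧ η' (x + e1) = b).card ∧
      (V.filter fun x => x + e2 ∈ V ∧ η x = a ∧ η (x + e2) = b).card
        = (V.filter fun x => x + e2 ∈ V ∧ η' x = a ∧ η' (x + e2) = b).card := by
  classical
  let v : Fin 2 × Fin (N + 1) × Fin (N + 1) → ℝ := fun p =>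
    if p.1 = 0 then f1 p.2.1 p.2.2 else f2 p.2.1 p.2.2
  let cnt : (ℤ × ℤ → ℕ) → Fin 2 × Fin (N + 1) × Fin (N + 1) → ℕ := fun ζ p =>
    if p.1 = 0 then (V.filter fun x => x + e1 ∈ V ∧ ζ x = p.2.1 ∧ ζ (x + e1) = p.2.2).card
    else (V.filter fun x => x + e2 ∈ V ∧ ζ x = p.2.1 ∧ ζ (x + e2) = p.2.2).card
  have key : ∀ ζ, (∀ x, ζ x ≤ N) →
      interactionEnergy f1 f2 V ζ = ∑ p, (cnt ζ p : ℝ) * v p := by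
    intro ζ hζ
    rw [interactionEnergy, dir_sum N f1 e1 V ζ hζ, dir_sum N f2 e2 V ζ hζ]
    conv_rhs => rw [Fintype.sum_prod_type, Fin.sum_univ_two]
    simp [cnt, v]
  have hzero : ∀ p, ((cnt η p : ℚ) - cnt η' p) = 0 := by
    refine Fintype.linearIndependent_iff.mp hgen
      (fun p => (cnt η p : ℚ) - cnt η' p) ?_
    have h1 := key η hη
    have h2 := key η' hη'
    have heq : ∑ p, ((cnt η p : ℚ) - cnt η' p) • v p
        = ∑ p, (cnt η p : ℝ) * v p - ∑ p, (cnt η' p : ℝ) * v p := by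
      rw [← Finset.sum_sub_distrib]
      refine Finset.sum_congr rfl fun p _ => ?_
      push_cast [Rat.smul_def]
      ring
    show ∑ p, ((cnt η p : ℚ) - cnt η' p) • v p = 0
    rw [heq, ← h1, ← h2, hE, sub_self]
  have hcnt : ∀ p, cnt η p = cnt η' p := fun p => by
    have h := sub_eq_zero.mp (hzero p)
    exact_mod_cast h
  intro a b ha hb
  constructor
  · have := hcnt (0, ⟨a, Nat.lt_succ_of_le ha⟩, ⟨b, Nat.lt_succ_of_le hb⟩)
    simpa [cnt] using this
  · have := hcnt (1, ⟨a, Nat.lt_succ_of_le ha⟩, ⟨b, Nat.lt_succ_of_le hb⟩)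
    simpa [cnt] using this
end

section
/- Assume the genericity condition. Let x ∈ V and y = x + e₂, and suppose that all four nearest neighbours of x and all four nearest neighbours of y lie in V. Let η : V → {0,…,N} satisfy η y ≥ 1 and η x < N, and let η' be obtained from η by hopping one particle from y to x (η' x = η x + 1, η' y = η y − 1, η' = η elsewhere). If H⁰ᵢ(η') = H⁰ᵢ(η), then η y = η x + 1. -/
open Finset

def toF (N n : ℕ) : Fin (N + 1) := ⟨min n N, by omega⟩

lemma toF_eq {N m n : ℕ} (hm : m ≤ N) (hn : n ≤ N) : toF N m = toF N n ↔ m = n := by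
  simp [toF, Fin.mk.injEq]; omega

lemma toF_coe {N n : ℕ} (hn : n ≤ N) : ((toF N n : Fin (N+1)) : ℕ) = n := by
  simp [toF]; omega


/-- The `ℓ¹` distance on `ℤ²`. -/
def dist1 (x y : ℤ × ℤ) : ℕ :=
  (x.1 - y.1).natAbs + (x.2 - y.2).natAbs

/-- **Vertical hops are resonant only between occupations `a` and `a+1`.**
Under the genericity condition, let `x ∈ V`, `y = x + e₂`, with all four nearest
neighbours of `x` and of `y` inside `V`. If `η'` is obtained from `η` by hopping
one particle from `y` to `x` and the interaction energy is preserved, then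
`η y = η x + 1`. -/
theorem resonant_vertical_hop_forces_step (N : ℕ) (hN : 1 ≤ N) (f1 f2 : ℕ → ℕ → ℝ)
    (hgen : Generic N f1 f2) (V : Finset (ℤ × ℤ)) (x : ℤ × ℤ) (hxV : x ∈ V)
    (hnbx : ∀ w : ℤ × ℤ, dist1 w x = 1 → w ∈ V)
    (hnby : ∀ w : ℤ × ℤ, dist1 w (x + e2) = 1 → w ∈ V)
    (η η' : ℤ × ℤ → ℕ) (hη : ∀ w, η w ≤ N)
    (hy1 : 1 ≤ η (x + e2)) (hxN : η x < N)
    (h'x : η' x = η x + 1) (h'y : η' (x + e2) = η (x + e2) - 1)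
    (h' : ∀ w, w ≠ x → w ≠ x + e2 → η' w = η w)
    (hE : interactionEnergy f1 f2 V η' = interactionEnergy f1 f2 V η) :
    η (x + e2) = η x + 1 := by
  have hne : ∀ p q : ℤ × ℤ, p.1 ≠ q.1 ∨ p.2 ≠ q.2 → p ≠ q := by
    intro p q h hc; rw [Prod.ext_iff] at hc; tauto
  -- distinctness facts
  have n1 : x - e1 ≠ x := by apply hne; simp [e1, e2]; try omega
  have n2 : x - e1 ≠ x + e2 := by apply hne; simp [e1, e2]; try omega
  have n3 : x + e2 - e1 ≠ x := by apply hne; simp [e1, e2]; try omega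
  have n4 : x + e2 - e1 ≠ x + e2 := by apply hne; simp [e1, e2]; try omega
  have n5 : x ≠ x + e2 := by apply hne; simp [e1, e2]; try omega
  have n6 : x + e1 ≠ x := by apply hne; simp [e1, e2]; try omega
  have n7 : x + e1 ≠ x + e2 := by apply hne; simp [e1, e2]; try omega
  have n8 : x + e2 + e1 ≠ x := by apply hne; simp [e1, e2]; try omega
  have n9 : x + e2 + e1 ≠ x + e2 := by apply hne; simp [e1, e2]; try omega
  have n10 : x - e2 ≠ x := by apply hne; simp [e1, e2]; try omega
  have n11 : x - e2 ≠ x + e2 := by apply hne; simp [e1, e2]; try omega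
  have n12 : x + e2 + e2 ≠ x := by apply hne; simp [e1, e2]; try omega
  have n13 : x + e2 + e2 ≠ x + e2 := by apply hne; simp [e1, e2]; try omega
  have n14 : x - e1 ≠ x + e2 - e1 := by apply hne; simp [e1, e2]; try omega
  have n15 : x ≠ x + e2 - e1 := by apply hne; simp [e1, e2]; try omega
  -- membership
  have myV : x + e2 ∈ V := hnbx _ (by simp [dist1, e2])
  have m1 : x - e1 ∈ V := hnbx _ (by simp [dist1, e1])
  have m2 : x + e1 ∈ V := hnbx _ (by simp [dist1, e1])
  have m3 : x - e2 ∈ V := hnbx _ (by simp [dist1, e2])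
  have m4 : x + e2 - e1 ∈ V := hnby _ (by simp [dist1, e1])
  have m5 : x + e2 + e1 ∈ V := hnby _ (by simp [dist1, e1])
  have m6 : x + e2 + e2 ∈ V := hnby _ (by simp [dist1, e2])
  set S1 : Finset (ℤ × ℤ) := {x - e1, x, x + e2 - e1, x + e2} with hS1
  set S2 : Finset (ℤ × ℤ) := {x - e2, x, x + e2} with hS2
  set T1 := V.filter (fun w => w + e1 ∈ V) with hT1
  set T2 := V.filter (fun w => w + e2 ∈ V) with hT2
  have hsub1 : S1 ⊆ T1 := by
    intro w hw
    simp only [hS1, mem_insert, mem_singleton] at hw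
    simp only [hT1, mem_filter]
    rcases hw with rfl | rfl | rfl | rfl <;> simp_all
  have hsub2 : S2 ⊆ T2 := by
    intro w hw
    simp only [hS2, mem_insert, mem_singleton] at hw
    simp only [hT2, mem_filter]
    rcases hw with rfl | rfl | rfl <;> simp_all
  have hadd : ∀ w q : ℤ × ℤ, w ≠ q - e1 → w + e1 ≠ q := by
    intro w q h hc; exact h (by rw [eq_sub_iff_add_eq]; exact hc)
  have hadd2 : ∀ w q : ℤ × ℤ, w ≠ q - e2 → w + e2 ≠ q := by
    intro w q h hc; exact h (by rw [eq_sub_iff_add_eq]; exact hc)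
  have hd1 : ∀ w ∈ T1 \ S1, f1 (η' w) (η' (w + e1)) = f1 (η w) (η (w + e1)) := by
    intro w hw
    rw [mem_sdiff] at hw
    simp only [hS1, mem_insert, mem_singleton, not_or] at hw
    obtain ⟨-, hw1, hw2, hw3, hw4⟩ := hw
    rw [h' w hw2 hw4, h' (w + e1) (hadd _ _ hw1) (hadd _ _ hw3)]
  have hd2 : ∀ w ∈ T2 \ S2, f2 (η' w) (η' (w + e2)) = f2 (η w) (η (w + e2)) := by
    intro w hw
    rw [mem_sdiff] at hw
    simp only [hS2, mem_insert, mem_singleton, not_or] at hw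
    obtain ⟨-, hw1, hw2, hw3⟩ := hw
    have hx' : w + e2 ≠ x := hadd2 _ _ (by simpa using hw1)
    have hy' : w + e2 ≠ x + e2 := fun hc => hw2 (by exact add_right_cancel hc)
    rw [h' w hw2 hw3, h' (w + e2) hx' hy']
  have e1' : ∑ w ∈ T1, f1 (η' w) (η' (w + e1)) =
      ∑ w ∈ T1 \ S1, f1 (η w) (η (w + e1)) + ∑ w ∈ S1, f1 (η' w) (η' (w + e1)) := by
    rw [← Finset.sum_sdiff hsub1, Finset.sum_congr rfl hd1]
  have e1'' : ∑ w ∈ T1, f1 (η w) (η (w + e1)) =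
      ∑ w ∈ T1 \ S1, f1 (η w) (η (w + e1)) + ∑ w ∈ S1, f1 (η w) (η (w + e1)) :=
    (Finset.sum_sdiff hsub1).symm
  have e2' : ∑ w ∈ T2, f2 (η' w) (η' (w + e2)) =
      ∑ w ∈ T2 \ S2, f2 (η w) (η (w + e2)) + ∑ w ∈ S2, f2 (η' w) (η' (w + e2)) := by
    rw [← Finset.sum_sdiff hsub2, Finset.sum_congr rfl hd2]
  have e2'' : ∑ w ∈ T2, f2 (η w) (η (w + e2)) =
      ∑ w ∈ T2 \ S2, f2 (η w) (η (w + e2)) + ∑ w ∈ S2, f2 (η w) (η (w + e2)) :=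
    (Finset.sum_sdiff hsub2).symm
  have key : ∑ w ∈ S1, f1 (η' w) (η' (w + e1)) + ∑ w ∈ S2, f2 (η' w) (η' (w + e2)) =
      ∑ w ∈ S1, f1 (η w) (η (w + e1)) + ∑ w ∈ S2, f2 (η w) (η (w + e2)) := by
    have := hE
    unfold interactionEnergy at this
    rw [← hT1, ← hT2] at this
    rw [e1', e1'', e2', e2''] at this
    linarith
  -- evaluate the sums over S1, S2 explicitly
  have hS1sum : ∀ θ : ℤ × ℤ → ℕ, ∑ w ∈ S1, f1 (θ w) (θ (w + e1)) =
      f1 (θ (x - e1)) (θ (x - e1 + e1)) + f1 (θ x) (θ (x + e1))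
      + f1 (θ (x + e2 - e1)) (θ (x + e2 - e1 + e1)) + f1 (θ (x + e2)) (θ (x + e2 + e1)) := by
    intro θ
    rw [hS1]
    rw [Finset.sum_insert (by simp [n1, n14, n2]),
        Finset.sum_insert (by simp [n15, n5]),
        Finset.sum_insert (by simp [n4]),
        Finset.sum_singleton]
    ring
  have hS2sum : ∀ θ : ℤ × ℤ → ℕ, ∑ w ∈ S2, f2 (θ w) (θ (w + e2)) =
      f2 (θ (x - e2)) (θ (x - e2 + e2)) + f2 (θ x) (θ (x + e2))
      + f2 (θ (x + e2)) (θ (x + e2 + e2)) := by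
    intro θ
    rw [hS2]
    rw [Finset.sum_insert (by simp [n10, n11]),
        Finset.sum_insert (by simp [n5]),
        Finset.sum_singleton]
    ring
  rw [hS1sum, hS1sum, hS2sum, hS2sum] at key
  have c1 : x - e1 + e1 = x := by rw [sub_add_cancel]
  have c2 : x + e2 - e1 + e1 = x + e2 := by rw [sub_add_cancel]
  have c3 : x - e2 + e2 = x := by rw [sub_add_cancel]
  rw [c1, c2, c3] at key
  rw [h'x, h'y] at key
  rw [h' _ n1 n2, h' _ n6 n7, h' _ n3 n4, h' _ n8 n9, h' _ n10 n11, h' _ n12 n13] at key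

  have ha : η x ≤ N := hη x
  have hbN : η (x+e2) ≤ N := hη _
  have hl : η (x-e1) ≤ N := hη _
  have hr : η (x+e1) ≤ N := hη _
  have hd : η (x-e2) ≤ N := hη _
  have hL : η (x+e2-e1) ≤ N := hη _
  have hR : η (x+e2+e1) ≤ N := hη _
  have hu : η (x+e2+e2) ≤ N := hη _
  have hb1 : 1 ≤ η (x+e2) := hy1
  have haN : η x < N := hxN
  show η (x+e2) = η x + 1

  by_contra hne
  set v : Fin 2 × Fin (N + 1) × Fin (N + 1) → ℝ := fun p =>
    if p.1 = 0 then f1 p.2.1 p.2.2 else f2 p.2.1 p.2.2 with hv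
  set g : Fin 2 × Fin (N + 1) × Fin (N + 1) → ℚ := fun i =>
    (if i = (0, toF N (η (x-e1)), toF N ((η x)+1)) then 1 else 0)
    + (if i = (0, toF N ((η x)+1), toF N (η (x+e1))) then 1 else 0)
    + (if i = (0, toF N (η (x+e2-e1)), toF N ((η (x+e2))-1)) then 1 else 0)
    + (if i = (0, toF N ((η (x+e2))-1), toF N (η (x+e2+e1))) then 1 else 0)
    + (if i = (1, toF N (η (x-e2)), toF N ((η x)+1)) then 1 else 0)
    + (if i = (1, toF N ((η x)+1), toF N ((η (x+e2))-1)) then 1 else 0)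
    + (if i = (1, toF N ((η (x+e2))-1), toF N (η (x+e2+e2))) then 1 else 0)
    - (if i = (0, toF N (η (x-e1)), toF N (η x)) then 1 else 0)
    - (if i = (0, toF N (η x), toF N (η (x+e1))) then 1 else 0)
    - (if i = (0, toF N (η (x+e2-e1)), toF N (η (x+e2))) then 1 else 0)
    - (if i = (0, toF N (η (x+e2)), toF N (η (x+e2+e1))) then 1 else 0)
    - (if i = (1, toF N (η (x-e2)), toF N (η x)) then 1 else 0)
    - (if i = (1, toF N (η x), toF N (η (x+e2))) then 1 else 0)
    - (if i = (1, toF N (η (x+e2)), toF N (η (x+e2+e2))) then 1 else 0) with hg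
  have ha1 : (η x) + 1 ≤ N := haN
  have hbm : (η (x+e2)) - 1 ≤ N := by omega
  have hsum : ∑ i, g i • v i = 0 := by
    simp only [hg, add_smul, sub_smul, ite_smul, one_smul, zero_smul,
      Finset.sum_add_distrib, Finset.sum_sub_distrib, Finset.sum_ite_eq',
      Finset.mem_univ, if_true]
    simp only [hv]
    norm_num
    rw [toF_coe ha, toF_coe hbN, toF_coe hl, toF_coe hr, toF_coe hd, toF_coe hL,
      toF_coe hR, toF_coe hu, toF_coe ha1, toF_coe hbm]
    linarith
  have h0 := (Fintype.linearIndependent_iff.mp hgen g (by exact hsum))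
    (1, toF N ((η x)+1), toF N ((η (x+e2))-1))
  simp only [hg] at h0
  have c1 : toF N ((η (x+e2))-1) ≠ toF N (η x) := by rw [Ne, toF_eq hbm ha]; omega
  have c2 : toF N ((η x)+1) ≠ toF N (η x) := by rw [Ne, toF_eq ha1 ha]; omega
  have c3 : toF N ((η x)+1) ≠ toF N (η (x+e2)) := by rw [Ne, toF_eq ha1 hbN]; omega
  have c4 : (1 : Fin 2) ≠ 0 := by decide
  simp only [Prod.mk.injEq, c1, c2, c3, c4, false_and, and_false, if_false, if_true,
    and_true, true_and] at h0
  split_ifs at h0 <;> norm_num at h0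
end

section
/- Assume the genericity condition. Let p ∈ ℤ² and consider the four sites of the unit square s₁ = p, s₂ = p + e₁, s₃ = p + e₁ + e₂, s₄ = p + e₂, and assume every site of ℤ² at ℓ¹-distance at most 2 from one of these four sites lies in V. Let η : V → {0,…,N} satisfy |η s₁ − η s₂| ≥ 2, |η s₂ − η s₃| ≥ 2, |η s₃ − η s₄| ≥ 2 and |η s₄ − η s₁| ≥ 2. Then any configuration η' obtained from η by a finite sequence of nearest-neighbour particle hops (each hop moving one particle between two sites of V at ℓ¹-distance 1, the source having at least one particle and the target having fewer than N particles) each of which preserves the interaction energy H⁰ᵢ, satisfies η' sᵢ = η sᵢ for i = 1,2,3,4. In other words, a square of nearest neighbours whose occupation numbers differ by at least 2 along each side is frozen under the resonant dynamics. -/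
open Finset

/-- A single nearest-neighbour particle hop: one particle moves between two sites
of `V` at `ℓ¹`-distance `1`, the source carrying at least one particle and the
target fewer than `N` particles; all other sites are unchanged. -/
def Hop (N : ℕ) (V : Finset (ℤ × ℤ)) (η η' : ℤ × ℤ → ℕ) : Prop :=
  ∃ u v : ℤ × ℤ, u ∈ V ∧ v ∈ V ∧ dist1 u v = 1 ∧
    1 ≤ η v ∧ η u < N ∧
    η' u = η u + 1 ∧ η' v = η v - 1 ∧ ∀ z, z ≠ u → z ≠ v → η' z = η z

/-- A resonant hop: a nearest-neighbour hop preserving the interaction energy. -/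
def ResonantHop (N : ℕ) (f1 f2 : ℕ → ℕ → ℝ) (V : Finset (ℤ × ℤ))
    (η η' : ℤ × ℤ → ℕ) : Prop :=
  Hop N V η η' ∧ interactionEnergy f1 f2 V η' = interactionEnergy f1 f2 V η

/-!
By genericity, two configurations with values in `{0,…,N}` have the same energy only if they
carry the same multiset of bond labels `(direction, η x, η (x + e))`. A hop between `x` and
`x + e` changes only the labels of bonds touching these two sites, and matching the labels of the
bonds along `e` before and after the hop forces the three bonds along `e` through `x` or `x + e`
to have gap at most `1`. Each corner of the square lies on a side of gap at least `2` in each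
direction, so no resonant hop touches a corner; hence the corners, and with them the gaps of the
sides, never change along the chain.
-/

theorem LinearIndepOn.eq_of_multiset_sum_map_eq {ι M : Type*} [AddCommMonoid M] {v : ι → M}
    {s : Set ι} (hv : LinearIndepOn ℕ v s) {S T : Multiset ι} (hS : ∀ a ∈ S, a ∈ s)
    (hT : ∀ a ∈ T, a ∈ s) (h : (S.map v).sum = (T.map v).sum) : S = T := by
  classical
  have hsum : ∀ U : Multiset ι,
      Finsupp.linearCombination ℕ v (Multiset.toFinsupp U) = (U.map v).sum := by
    intro U
    rw [Finsupp.linearCombination_apply, Finsupp.sum, Multiset.toFinsupp_support,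
      Finset.sum_multiset_map_count]
    rfl
  have hsupp : ∀ U : Multiset ι, (∀ a ∈ U, a ∈ s) →
      Multiset.toFinsupp U ∈ Finsupp.supported ℕ ℕ s := by
    intro U hU a ha
    simp only [Multiset.toFinsupp_support, Finset.mem_coe, Multiset.mem_toFinset] at ha
    exact hU a ha
  exact Multiset.toFinsupp.injective <|
    linearIndepOn_iffₛ.1 hv _ (hsupp S hS) _ (hsupp T hT) (by rw [hsum, hsum, h])

section Bonds

variable {N : ℕ} {f1 f2 : ℕ → ℕ → ℝ} {V : Finset (ℤ × ℤ)} {η η' : ℤ × ℤ → ℕ}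

def unitVec : Fin 2 → ℤ × ℤ := ![e1, e2]

def bonds (V : Finset (ℤ × ℤ)) : Finset (Fin 2 × (ℤ × ℤ)) :=
  (univ ×ˢ V).filter fun b => b.2 + unitVec b.1 ∈ V

def bondLabel (η : ℤ × ℤ → ℕ) (b : Fin 2 × (ℤ × ℤ)) : Fin 2 × ℕ × ℕ :=
  (b.1, η b.2, η (b.2 + unitVec b.1))

def bondWeight (f1 f2 : ℕ → ℕ → ℝ) (l : Fin 2 × ℕ × ℕ) : ℝ :=
  if l.1 = 0 then f1 l.2.1 l.2.2 else f2 l.2.1 l.2.2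

def labels (V : Finset (ℤ × ℤ)) (η : ℤ × ℤ → ℕ) : Multiset (Fin 2 × ℕ × ℕ) :=
  (bonds V).val.map (bondLabel η)

def localLabels (V S : Finset (ℤ × ℤ)) (η : ℤ × ℤ → ℕ) : Multiset (Fin 2 × ℕ × ℕ) :=
  ((bonds V).filter fun b => b.2 ∈ S ∨ b.2 + unitVec b.1 ∈ S).val.map (bondLabel η)

def gap (η : ℤ × ℤ → ℕ) (i : Fin 2) (z : ℤ × ℤ) : ℕ :=
  ((η z : ℤ) - η (z + unitVec i)).natAbs

theorem unitVec_ne_zero (i : Fin 2) : unitVec i ≠ 0 := by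
  fin_cases i <;> simp [unitVec, e1, e2]

theorem unitVec_add_self_ne_zero (i : Fin 2) : unitVec i + unitVec i ≠ 0 := by
  fin_cases i <;> simp [unitVec, e1, e2]

theorem exists_unitVec_of_dist1_eq_one {u v : ℤ × ℤ} (h : dist1 u v = 1) :
    ∃ i, v = u + unitVec i ∨ u = v + unitVec i := by
  simp only [dist1] at h
  rcases (by omega : (u.1 - v.1).natAbs = 1 ∧ u.2 = v.2 ∨ u.1 = v.1 ∧ (u.2 - v.2).natAbs = 1)
    with ⟨h1, h2⟩ | ⟨h1, h2⟩
  · refine ⟨0, ?_⟩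
    simp only [unitVec, e1, Matrix.cons_val_zero, Prod.ext_iff, Prod.fst_add, Prod.snd_add]
    omega
  · refine ⟨1, ?_⟩
    simp only [unitVec, e2, Matrix.cons_val_one, Matrix.cons_val_zero, Prod.ext_iff, Prod.fst_add,
      Prod.snd_add]
    omega

theorem interactionEnergy_eq_sum_bonds :
    interactionEnergy f1 f2 V η = ∑ b ∈ bonds V, bondWeight f1 f2 (bondLabel η b) := by
  rw [bonds, sum_filter, sum_product, Fin.sum_univ_two, interactionEnergy, sum_filter, sum_filter]
  simp [bondWeight, bondLabel, unitVec]

theorem Generic.linearIndepOn (hgen : Generic N f1 f2) :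
    LinearIndepOn ℕ (bondWeight f1 f2) {l | l.2.1 ≤ N ∧ l.2.2 ≤ N} := by
  let ι : Fin 2 × Fin (N + 1) × Fin (N + 1) → Fin 2 × ℕ × ℕ := fun q => (q.1, q.2.1, q.2.2)
  have hι : Function.Injective ι := by
    rintro ⟨i, a, b⟩ ⟨j, c, d⟩ h
    simp only [ι, Prod.mk.injEq, Fin.val_inj] at h
    simp [h]
  refine ((linearIndepOn_range_iff hι _).2 (hgen.restrict_scalars' ℕ)).mono ?_
  rintro ⟨i, a, b⟩ ⟨ha, hb⟩
  exact ⟨(i, ⟨a, Nat.lt_succ_of_le ha⟩, ⟨b, Nat.lt_succ_of_le hb⟩), rfl⟩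

theorem labels_eq_of_interactionEnergy_eq (hgen : Generic N f1 f2) (hη : ∀ z, η z ≤ N)
    (hη' : ∀ z, η' z ≤ N) (hE : interactionEnergy f1 f2 V η' = interactionEnergy f1 f2 V η) :
    labels V η' = labels V η := by
  refine hgen.linearIndepOn.eq_of_multiset_sum_map_eq ?_ ?_ ?_
  · simp only [labels, Multiset.mem_map]
    rintro _ ⟨b, -, rfl⟩
    exact ⟨hη' _, hη' _⟩
  · simp only [labels, Multiset.mem_map]
    rintro _ ⟨b, -, rfl⟩
    exact ⟨hη _, hη _⟩
  · simpa only [labels, Multiset.map_map, Function.comp_def, ← sum_eq_multiset_sum,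
      interactionEnergy_eq_sum_bonds] using hE

theorem localLabels_eq_of_labels_eq {S : Finset (ℤ × ℤ)} (hsame : ∀ z ∉ S, η' z = η z)
    (h : labels V η' = labels V η) : localLabels V S η' = localLabels V S η := by
  let far := (bonds V).val.filter fun b => ¬(b.2 ∈ S ∨ b.2 + unitVec b.1 ∈ S)
  have hsplit : ∀ η, labels V η = localLabels V S η + far.map (bondLabel η) := fun η => by
    rw [localLabels, filter_val, ← Multiset.map_add, Multiset.filter_add_not, labels]
  have hfar : far.map (bondLabel η') = far.map (bondLabel η) := by
    refine Multiset.map_congr rfl fun b hb => ?_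
    obtain ⟨h1, h2⟩ := not_or.1 (Multiset.mem_filter.1 hb).2
    simp only [bondLabel, hsame _ h1, hsame _ h2]
  rw [hsplit, hsplit, hfar] at h
  exact add_right_cancel h

theorem bondLabel_mem_localLabels {S : Finset (ℤ × ℤ)} (η : ℤ × ℤ → ℕ) {i : Fin 2}
    {z : ℤ × ℤ} (hz : z ∈ V) (hz' : z + unitVec i ∈ V) (hS : z ∈ S ∨ z + unitVec i ∈ S) :
    (i, η z, η (z + unitVec i)) ∈ localLabels V S η :=
  Multiset.mem_map_of_mem (bondLabel η) (a := (i, z)) <| by simp [bonds, hz, hz', hS]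

theorem bondLabel_cases_of_mem_localLabels {i : Fin 2} {x : ℤ × ℤ} {m n : ℕ}
    (h : (i, m, n) ∈ localLabels V {x, x + unitVec i} η) :
    (η (x - unitVec i) = m ∧ η x = n) ∨ (η x = m ∧ η (x + unitVec i) = n) ∨
      (η (x + unitVec i) = m ∧ η (x + unitVec i + unitVec i) = n) := by
  obtain ⟨⟨j, z⟩, hb, hlabel⟩ := Multiset.mem_map.1 h
  simp only [bondLabel, Prod.mk.injEq] at hlabel
  obtain ⟨rfl, rfl, rfl⟩ := hlabel
  simp only [filter_val, Multiset.mem_filter, mem_insert, mem_singleton, add_left_inj] at hb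
  obtain ⟨-, (rfl | rfl) | rfl | rfl⟩ := hb
  · exact Or.inr (Or.inl ⟨rfl, rfl⟩)
  · exact Or.inr (Or.inr ⟨rfl, rfl⟩)
  · exact Or.inl ⟨by rw [add_sub_cancel_right], rfl⟩
  · exact Or.inr (Or.inl ⟨rfl, rfl⟩)

theorem gap_le_one_of_resonant_shift (hgen : Generic N f1 f2) (hη : ∀ z, η z ≤ N)
    (hη' : ∀ z, η' z ≤ N) {i : Fin 2} {x : ℤ × ℤ}
    (hmem : ∀ w ∈ ({x - unitVec i, x, x + unitVec i, x + unitVec i + unitVec i} :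
      Finset (ℤ × ℤ)), w ∈ V)
    (hsame : ∀ z ∉ ({x, x + unitVec i} : Finset (ℤ × ℤ)), η' z = η z)
    (hshift : (η' x = η x + 1 ∧ η (x + unitVec i) = η' (x + unitVec i) + 1) ∨
      (η x = η' x + 1 ∧ η' (x + unitVec i) = η (x + unitVec i) + 1))
    (hE : interactionEnergy f1 f2 V η' = interactionEnergy f1 f2 V η) :
    ∀ z ∈ ({x - unitVec i, x, x + unitVec i} : Finset (ℤ × ℤ)), gap η i z ≤ 1 := by
  have hloc := localLabels_eq_of_labels_eq hsame
    (labels_eq_of_interactionEnergy_eq hgen hη hη' hE)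
  simp only [mem_insert, mem_singleton, forall_eq_or_imp, forall_eq] at hmem
  obtain ⟨hprev, hx, hnext, hnext2⟩ := hmem
  have hL : η' (x - unitVec i) = η (x - unitVec i) := hsame _ <| by
    simp [unitVec_ne_zero, sub_eq_iff_eq_add, add_assoc, unitVec_add_self_ne_zero]
  have hR : η' (x + unitVec i + unitVec i) = η (x + unitVec i + unitVec i) := hsame _ <| by
    simp [unitVec_ne_zero, add_assoc, unitVec_add_self_ne_zero]
  have hnew := bondLabel_cases_of_mem_localLabels <| hloc ▸
    bondLabel_mem_localLabels η' hx hnext (Or.inl (mem_insert_self _ _))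
  have hleft := bondLabel_cases_of_mem_localLabels <| hloc.symm ▸
    bondLabel_mem_localLabels η hprev (by rwa [sub_add_cancel]) (Or.inr (by simp))
  have hright := bondLabel_cases_of_mem_localLabels <| hloc.symm ▸
    bondLabel_mem_localLabels η hnext hnext2 (Or.inl (by simp))
  simp only [mem_insert, mem_singleton, forall_eq_or_imp, forall_eq, gap, sub_add_cancel]
    at hleft ⊢
  omega

theorem Hop.le_of_forall_le (h : Hop N V η η') (hη : ∀ z, η z ≤ N) : ∀ z, η' z ≤ N := by
  obtain ⟨u, v, -, -, -, -, hu, hu', hv', hsame⟩ := h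
  intro z
  by_cases hzu : z = u
  · subst hzu
    omega
  by_cases hzv : z = v
  · subst hzv
    have := hη z
    omega
  rw [hsame z hzu hzv]
  exact hη z

theorem Hop.exists_shift (h : Hop N V η η') :
    ∃ i x, (∀ z ∉ ({x, x + unitVec i} : Finset (ℤ × ℤ)), η' z = η z) ∧
      ((η' x = η x + 1 ∧ η (x + unitVec i) = η' (x + unitVec i) + 1) ∨
        (η x = η' x + 1 ∧ η' (x + unitVec i) = η (x + unitVec i) + 1)) := by
  obtain ⟨u, v, -, -, huv, hv, -, hu', hv', hsame⟩ := h
  obtain ⟨i, rfl | rfl⟩ := exists_unitVec_of_dist1_eq_one huv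
  · refine ⟨i, u, fun z hz => ?_, Or.inl ⟨hu', by omega⟩⟩
    simp only [mem_insert, mem_singleton, not_or] at hz
    exact hsame z hz.1 hz.2
  · refine ⟨i, v, fun z hz => ?_, Or.inr ⟨by omega, hu'⟩⟩
    simp only [mem_insert, mem_singleton, not_or] at hz
    exact hsame z hz.2 hz.1

theorem dist1_le_two_of_endpoint {i : Fin 2} {x c : ℤ × ℤ} (hc : c = x ∨ c = x + unitVec i) :
    ∀ w ∈ ({x - unitVec i, x, x + unitVec i, x + unitVec i + unitVec i} : Finset (ℤ × ℤ)),
      dist1 w c ≤ 2 := by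
  simp only [mem_insert, mem_singleton, forall_eq_or_imp, forall_eq]
  fin_cases i <;> rcases hc with rfl | rfl <;> simp [dist1, unitVec, e1, e2] <;> omega

end Bonds

section Square

def squareCorners (p : ℤ × ℤ) : Finset (ℤ × ℤ) := {p, p + e1, p + e1 + e2, p + e2}

def squareSides (p : ℤ × ℤ) : Finset (Fin 2 × (ℤ × ℤ)) :=
  {(0, p), (1, p + e1), (0, p + e2), (1, p)}

def IsStiffSquare (η : ℤ × ℤ → ℕ) (p : ℤ × ℤ) : Prop :=
  ∀ b ∈ squareSides p, 2 ≤ gap η b.1 b.2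

variable {p : ℤ × ℤ} {η η' : ℤ × ℤ → ℕ}

theorem mem_squareSides_of_mem_squareCorners {c : ℤ × ℤ} (hc : c ∈ squareCorners p)
    (i : Fin 2) : (i, c - unitVec i) ∈ squareSides p ∨ (i, c) ∈ squareSides p := by
  simp only [squareCorners, mem_insert, mem_singleton] at hc
  fin_cases i <;> rcases hc with rfl | rfl | rfl | rfl <;>
    simp [squareSides, unitVec, e1, e2, Prod.ext_iff]

theorem IsStiffSquare.congr (h : IsStiffSquare η p) (hc : ∀ c ∈ squareCorners p, η' c = η c) :
    IsStiffSquare η' p := by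
  intro b hb
  have hends : b.2 ∈ squareCorners p ∧ b.2 + unitVec b.1 ∈ squareCorners p := by
    simp only [squareSides, mem_insert, mem_singleton] at hb
    rcases hb with rfl | rfl | rfl | rfl <;> simp [squareCorners, unitVec, e1, e2, Prod.ext_iff]
  simpa only [gap, hc _ hends.1, hc _ hends.2] using h b hb

theorem IsStiffSquare.eq_on_squareCorners_of_resonantHop {N : ℕ} {f1 f2 : ℕ → ℕ → ℝ}
    (hgen : Generic N f1 f2) {V : Finset (ℤ × ℤ)}
    (hV : ∀ c ∈ squareCorners p, ∀ w, dist1 w c ≤ 2 → w ∈ V) (hη : ∀ z, η z ≤ N)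
    (hstiff : IsStiffSquare η p) (h : ResonantHop N f1 f2 V η η') :
    ∀ c ∈ squareCorners p, η' c = η c := by
  intro c hc
  by_contra hne
  obtain ⟨i, x, hsame, hshift⟩ := h.1.exists_shift
  have hcx : c = x ∨ c = x + unitVec i := by
    by_contra hcx
    exact hne (hsame c (by simpa using hcx))
  have hgap := gap_le_one_of_resonant_shift hgen hη (h.1.le_of_forall_le hη)
    (fun w hw => hV c hc w (dist1_le_two_of_endpoint hcx w hw)) hsame hshift h.2
  obtain ⟨z, hz, hzside⟩ : ∃ z ∈ ({x - unitVec i, x, x + unitVec i} : Finset (ℤ × ℤ)),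
      (i, z) ∈ squareSides p := by
    rcases mem_squareSides_of_mem_squareCorners hc i with hz | hz <;>
      rcases hcx with rfl | rfl <;> exact ⟨_, by simp, hz⟩
  have hwide : 2 ≤ gap η i z := hstiff _ hzside
  exact absurd (hgap z hz) (by omega)

end Square

theorem frozen_square_resonant_dynamics_general (N : ℕ) (f1 f2 : ℕ → ℕ → ℝ)
    (hgen : Generic N f1 f2) (V : Finset (ℤ × ℤ)) (p : ℤ × ℤ)
    (hV : ∀ w : ℤ × ℤ,
      (dist1 w p ≤ 2 ∨ dist1 w (p + e1) ≤ 2 ∨ dist1 w (p + e1 + e2) ≤ 2 ∨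
        dist1 w (p + e2) ≤ 2) → w ∈ V)
    (η η' : ℤ × ℤ → ℕ) (hη : ∀ z, η z ≤ N)
    (h12 : 2 ≤ ((η p : ℤ) - (η (p + e1) : ℤ)).natAbs)
    (h23 : 2 ≤ ((η (p + e1) : ℤ) - (η (p + e1 + e2) : ℤ)).natAbs)
    (h34 : 2 ≤ ((η (p + e1 + e2) : ℤ) - (η (p + e2) : ℤ)).natAbs)
    (h41 : 2 ≤ ((η (p + e2) : ℤ) - (η p : ℤ)).natAbs)
    (hchain : Relation.ReflTransGen (ResonantHop N f1 f2 V) η η') :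
    η' p = η p ∧ η' (p + e1) = η (p + e1) ∧
      η' (p + e1 + e2) = η (p + e1 + e2) ∧ η' (p + e2) = η (p + e2) := by
  have hV' : ∀ c ∈ squareCorners p, ∀ w, dist1 w c ≤ 2 → w ∈ V := by
    simp only [squareCorners, mem_insert, mem_singleton]
    rintro c (rfl | rfl | rfl | rfl) w hw <;> exact hV w (by tauto)
  have hstiff : IsStiffSquare η p := by
    simp only [IsStiffSquare, squareSides, mem_insert, mem_singleton]
    rintro b (rfl | rfl | rfl | rfl)
    · exact h12
    · exact h23
    · rw [gap, ← Int.natAbs_neg, neg_sub]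
      simpa [unitVec, add_right_comm] using h34
    · rw [gap, ← Int.natAbs_neg, neg_sub]
      exact h41
  suffices (∀ z, η' z ≤ N) ∧ ∀ c ∈ squareCorners p, η' c = η c by
    simpa [squareCorners] using this.2
  induction hchain with
  | refl => exact ⟨hη, fun _ _ => rfl⟩
  | tail _ hop ih =>
    obtain ⟨hbound, hcorners⟩ := ih
    refine ⟨hop.1.le_of_forall_le hbound, fun c hc => ?_⟩
    rw [(hstiff.congr hcorners).eq_on_squareCorners_of_resonantHop hgen hV' hbound hop c hc,
      hcorners c hc]

/-- **A strongly inhomogeneous square is frozen under the resonant dynamics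
(Appendix 2, equations (20)–(21)).** Under the genericity condition, consider the
unit square with corners `s₁ = p`, `s₂ = p + e₁`, `s₃ = p + e₁ + e₂`,
`s₄ = p + e₂`, all of whose `ℓ¹`-`2`-neighbourhoods lie in `V`, and a
configuration `η` whose occupation numbers differ by at least `2` along each side
of the square. Then any configuration `η'` obtained from `η` by a finite sequence
of nearest-neighbour hops, each preserving the interaction energy, agrees with
`η` on the four corners. -/
theorem frozen_square_resonant_dynamics (N : ℕ) (hN : 1 ≤ N) (f1 f2 : ℕ → ℕ → ℝ)
    (hgen : Generic N f1 f2) (V : Finset (ℤ × ℤ)) (p : ℤ × ℤ)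
    (hV : ∀ w : ℤ × ℤ,
      (dist1 w p ≤ 2 ∨ dist1 w (p + e1) ≤ 2 ∨ dist1 w (p + e1 + e2) ≤ 2 ∨
        dist1 w (p + e2) ≤ 2) → w ∈ V)
    (η η' : ℤ × ℤ → ℕ) (hη : ∀ z, η z ≤ N)
    (h12 : 2 ≤ ((η p : ℤ) - (η (p + e1) : ℤ)).natAbs)
    (h23 : 2 ≤ ((η (p + e1) : ℤ) - (η (p + e1 + e2) : ℤ)).natAbs)
    (h34 : 2 ≤ ((η (p + e1 + e2) : ℤ) - (η (p + e2) : ℤ)).natAbs)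
    (h41 : 2 ≤ ((η (p + e2) : ℤ) - (η p : ℤ)).natAbs)
    (hchain : Relation.ReflTransGen (ResonantHop N f1 f2 V) η η') :
    η' p = η p ∧ η' (p + e1) = η (p + e1) ∧
      η' (p + e1 + e2) = η (p + e1 + e2) ∧ η' (p + e2) = η (p + e2) :=
  frozen_square_resonant_dynamics_general N f1 f2 hgen V p hV η η' hη h12 h23 h34 h41 hchain
end
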